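/- Let V be 2n-dimensional with symplectic form ω = Σ_{i=1}^n dx^{2i-1} ∧ dx^{2i} and let p be odd, 0 < p < 2n. Define the Lefschetz map L : V* → Λᵖ V* by L(φ) = φ ∧ ω^{(p-1)/2}. Then L is injective. -/

import Mathlib

/-!
Let `Λ` be the dual Lefschetz operator: the sum, over the Darboux pairs of a basis, of the
composite of the contractions with the two coordinate functionals of the pair. Since contraction
is a graded derivation, a direct computation gives
`Λ (φ ∧ ω^(m+1)) = (m+1)(m+1-n) • φ ∧ ω^m`, and the coefficient is nonzero for `m + 1 < n`.
Hence `φ ∧ ω^(m+1) = 0` forces `φ ∧ ω^m = 0`, and descending to `m = 0` gives `φ = 0`.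
-/

open Module ExteriorAlgebra

theorem Module.Basis.sum_coord_smul_fin_two {R M κ : Type*} [CommRing R] [AddCommGroup M]
    [Module R M] [Fintype κ] (e : Basis (κ × Fin 2) R M) (φ : M) :
    ∑ i, (e.coord (i, 0) φ • e (i, 0) + e.coord (i, 1) φ • e (i, 1)) = φ := by
  have h := e.sum_repr φ
  rw [Fintype.sum_prod_type] at h
  simpa only [Fin.sum_univ_two, Basis.coord_apply] using h

namespace ExteriorAlgebra

variable {R : Type*} [CommRing R] {M : Type*} [AddCommGroup M] [Module R M]

local notation:70 f " ⌋ " x:70 => CliffordAlgebra.contractLeft (Q := (0 : QuadraticForm R M)) f x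

theorem commute_ι_ι_mul_ι (w u v : M) : Commute (ι R w) (ι R u * ι R v) := by
  have swap (x y : M) : ι R x * ι R y = -(ι R y * ι R x) :=
    eq_neg_of_add_eq_zero_left (ι_add_mul_swap x y)
  unfold Commute SemiconjBy
  rw [← mul_assoc, swap w u, neg_mul, mul_assoc, swap w v, mul_neg, neg_neg, ← mul_assoc]

section Symplectic

variable {κ : Type*} [Fintype κ] (e : Basis (κ × Fin 2) R M)

noncomputable def symplecticForm : ExteriorAlgebra R M :=
  ∑ i, ι R (e (i, 0)) * ι R (e (i, 1))

theorem commute_ι_symplecticForm (w : M) : Commute (ι R w) (symplecticForm e) :=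
  Commute.sum_right _ _ _ fun _ _ => commute_ι_ι_mul_ι w _ _

theorem contractLeft_symplecticForm (f : Dual R M) :
    f ⌋ symplecticForm e = ι R (∑ i, (f (e (i, 0)) • e (i, 1) - f (e (i, 1)) • e (i, 0))) := by
  simp only [symplecticForm, map_sum, map_sub, map_smul, CliffordAlgebra.contractLeft_ι_mul,
    CliffordAlgebra.contractLeft_ι, Algebra.algebraMap_eq_smul_one, mul_smul_comm, mul_one]

theorem contractLeft_symplecticForm_mul (f : Dual R M) (x : ExteriorAlgebra R M) :
    f ⌋ (symplecticForm e * x) = (f ⌋ symplecticForm e) * x + symplecticForm e * (f ⌋ x) := by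
  simp only [symplecticForm, Finset.sum_mul, map_sum, ← Finset.sum_add_distrib, mul_assoc,
    CliffordAlgebra.contractLeft_ι_mul, CliffordAlgebra.contractLeft_ι,
    Algebra.algebraMap_eq_smul_one, mul_sub, sub_mul, smul_mul_assoc, mul_smul_comm, mul_one]
  refine Finset.sum_congr rfl fun i _ => ?_
  abel

theorem contractLeft_symplecticForm_pow_succ (f : Dual R M) (m : ℕ) :
    f ⌋ (symplecticForm e ^ (m + 1)) =
      (m + 1) • ((f ⌋ symplecticForm e) * symplecticForm e ^ m) := by
  induction m with
  | zero => simp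
  | succ m ih =>
    have hcomm : Commute (f ⌋ symplecticForm e) (symplecticForm e) := by
      rw [contractLeft_symplecticForm]; exact commute_ι_symplecticForm e _
    rw [pow_succ', contractLeft_symplecticForm_mul, ih, mul_smul_comm, ← mul_assoc,
      ← hcomm.eq, mul_assoc, ← pow_succ', succ_nsmul _ (m + 1)]
    abel

theorem contractLeft_coord_zero_symplecticForm (i : κ) :
    e.coord (i, 0) ⌋ symplecticForm e = ι R (e (i, 1)) := by
  classical
  simp [contractLeft_symplecticForm, Basis.coord_apply, Finsupp.single_apply]

theorem contractLeft_coord_one_symplecticForm (i : κ) :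
    e.coord (i, 1) ⌋ symplecticForm e = -ι R (e (i, 0)) := by
  classical
  simp [contractLeft_symplecticForm, Basis.coord_apply, Finsupp.single_apply]

theorem contractLeft_ι_mul_symplecticForm_pow_succ (f : Dual R M) (φ : M) (m : ℕ) :
    f ⌋ (ι R φ * symplecticForm e ^ (m + 1)) =
      f φ • symplecticForm e ^ (m + 1) -
        (m + 1) • (ι R φ * ((f ⌋ symplecticForm e) * symplecticForm e ^ m)) := by
  rw [CliffordAlgebra.contractLeft_ι_mul, contractLeft_symplecticForm_pow_succ, mul_smul_comm]

theorem sum_ι_mul_contractLeft_coord_symplecticForm_pow (m : ℕ) :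
    ∑ i, ι R (e (i, 0)) * (e.coord (i, 0) ⌋ symplecticForm e ^ m) = m • symplecticForm e ^ m := by
  cases m with
  | zero => simp
  | succ m =>
    simp only [contractLeft_symplecticForm_pow_succ, contractLeft_coord_zero_symplecticForm,
      mul_smul_comm, ← Finset.smul_sum, ← mul_assoc, ← Finset.sum_mul]
    rw [pow_succ' _ m]
    rfl

noncomputable def lefschetzDual : ExteriorAlgebra R M →ₗ[R] ExteriorAlgebra R M :=
  ∑ i, CliffordAlgebra.contractLeft (e.coord (i, 0)) ∘ₗ
    CliffordAlgebra.contractLeft (e.coord (i, 1))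

theorem contractLeft_coord_contractLeft_coord_ι_mul_symplecticForm_pow_succ
    (i : κ) (φ : M) (m : ℕ) :
    e.coord (i, 0) ⌋ (e.coord (i, 1) ⌋ (ι R φ * symplecticForm e ^ (m + 1))) =
      (m + 1) • (ι R (e.coord (i, 0) φ • e (i, 0) + e.coord (i, 1) φ • e (i, 1)) *
            symplecticForm e ^ m
        - ι R φ * symplecticForm e ^ m
        + ι R φ * (ι R (e (i, 0)) * (e.coord (i, 0) ⌋ symplecticForm e ^ m))) := by
  have hcoord : e.coord (i, 0) (e (i, 0)) = 1 := by simp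
  rw [contractLeft_ι_mul_symplecticForm_pow_succ, contractLeft_coord_one_symplecticForm,
    map_sub, map_smul, map_nsmul, contractLeft_symplecticForm_pow_succ,
    contractLeft_coord_zero_symplecticForm, neg_mul, mul_neg, map_neg,
    CliffordAlgebra.contractLeft_ι_mul, CliffordAlgebra.contractLeft_ι_mul, hcoord, one_smul]
  simp only [map_add, map_smul, add_mul, smul_mul_assoc, mul_sub]
  module

theorem lefschetzDual_ι_mul_symplecticForm_pow_succ (φ : M) (m : ℕ) :
    lefschetzDual e (ι R φ * symplecticForm e ^ (m + 1)) =
      ((m + 1 : ℤ) * (m + 1 - Fintype.card κ)) • (ι R φ * symplecticForm e ^ m) := by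
  simp only [lefschetzDual, LinearMap.sum_apply, LinearMap.comp_apply,
    contractLeft_coord_contractLeft_coord_ι_mul_symplecticForm_pow_succ]
  rw [← Finset.smul_sum, Finset.sum_add_distrib, Finset.sum_sub_distrib, ← Finset.sum_mul,
    ← map_sum, e.sum_coord_smul_fin_two, Finset.sum_const, Finset.card_univ, ← Finset.mul_sum,
    sum_ι_mul_contractLeft_coord_symplecticForm_pow, mul_smul_comm]
  module

end Symplectic

section Field

variable {K : Type*} [Field K] [CharZero K] {M : Type*} [AddCommGroup M] [Module K M]
  {κ : Type*} [Fintype κ] (e : Basis (κ × Fin 2) K M)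

theorem eq_zero_of_ι_mul_symplecticForm_pow_eq_zero {m : ℕ} (hm : m < Fintype.card κ) {φ : M}
    (h : ι K φ * symplecticForm e ^ m = 0) : φ = 0 := by
  induction m with
  | zero => simpa using h
  | succ m ih =>
    refine ih (by omega) ?_
    have hΛ := lefschetzDual_ι_mul_symplecticForm_pow_succ e φ m
    rw [h, map_zero, ← Int.cast_smul_eq_zsmul K] at hΛ
    have hcoef : (m + 1 : ℤ) * (m + 1 - Fintype.card κ) ≠ 0 := mul_ne_zero (by omega) (by omega)
    exact (smul_eq_zero.mp hΛ.symm).resolve_left (by exact_mod_cast hcoef)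

theorem injective_ι_mul_symplecticForm_pow {m : ℕ} (hm : m < Fintype.card κ) :
    Function.Injective fun φ : M => ι K φ * symplecticForm e ^ m := by
  intro φ ψ h
  rw [← sub_eq_zero]
  refine eq_zero_of_ι_mul_symplecticForm_pow_eq_zero e hm ?_
  rw [map_sub, sub_mul, sub_eq_zero]
  exact h

end Field

end ExteriorAlgebra

/-- the Lefschetz map `L(φ) = φ ∧ ω^{(p-1)/2}` from 1-forms to `p`-forms is
injective, for `p` odd with `0 < p < 2n` and `ω` the standard symplectic 2-form. -/
theorem stmt16 {n : ℕ} {V : Type*} [AddCommGroup V] [Module ℝ V]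
    (b : Basis (Fin (2 * n)) ℝ V)
    (dx : Fin (2 * n) → Dual ℝ V) (hdx : dx = ⇑b.dualBasis)
    (ω : ExteriorAlgebra ℝ (Dual ℝ V))
    (hω : ω = ∑ i : Fin n,
      ι ℝ (dx ⟨2 * (i : ℕ), by have := i.isLt; omega⟩) *
        ι ℝ (dx ⟨2 * (i : ℕ) + 1, by have := i.isLt; omega⟩))
    (p : ℕ) (hpodd : Odd p) (hp2n : p < 2 * n) :
    Function.Injective fun φ : Dual ℝ V => ι ℝ φ * ω ^ ((p - 1) / 2) := by
  -- `e (i, k) = dx ⟨2 * i + k, _⟩`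
  let e := b.dualBasis.reindex (finProdFinEquiv.trans (finCongr (mul_comm n 2))).symm
  have hωe : ω = symplecticForm e := by
    subst hdx hω
    refine Finset.sum_congr rfl fun i _ => ?_
    simp only [e, Basis.reindex_apply, Equiv.symm_symm, Equiv.trans_apply]
    congr 3 <;> ext <;>
      simp only [finCongr_apply, Fin.val_cast, finProdFinEquiv_apply_val] <;> omega
  obtain ⟨j, rfl⟩ := hpodd
  rw [hωe]
  exact injective_ι_mul_symplecticForm_pow e (by simp; omega)
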